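/- arXiv:1109.2769 — 5 statements merged into one kernel-verified Lean document; each statement's English description precedes it below -/
import Mathlib

section
/- Let G be a connected finite simple graph with minimum degree at least 3. Then the rainbow connection number of the line graph L(G) satisfies rc(L(G)) ≤ 3·rad(L(G)) ≤ 3·(rad(G) + 1). -/
/-- An edge coloring `c` (with colors in `Fin k`) makes `G` rainbow connected if every
pair of vertices is joined by a path whose edges receive pairwise distinct colors. -/
def SimpleGraph.IsRainbowColoring {V : Type*} (G : SimpleGraph V) {k : ℕ}
    (c : Sym2 V → Fin k) : Prop :=
  ∀ u v : V, ∃ p : G.Walk u v, p.IsPath ∧ (p.edges.map c).Nodup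

/-- The rainbow connection number: the least `k` admitting a rainbow `k`-edge-coloring. -/
noncomputable def SimpleGraph.rainbowConnectionNumber {V : Type*} (G : SimpleGraph V) : ℕ :=
  sInf {k : ℕ | ∃ c : Sym2 V → Fin k, G.IsRainbowColoring c}

/-- A graph is bridgeless if it is connected and no edge is a bridge. -/
def SimpleGraph.Bridgeless {V : Type*} (G : SimpleGraph V) : Prop :=
  G.Connected ∧ ∀ e ∈ G.edgeSet, ¬ G.IsBridge e

/-- The eccentricity of a vertex: the largest distance to another vertex. -/
noncomputable def SimpleGraph.eccentNat {V : Type*} [Fintype V] (G : SimpleGraph V) (x : V) : ℕ :=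
  Finset.univ.sup fun y => G.dist x y

/-- The radius of a graph: the least eccentricity of a vertex. -/
noncomputable def SimpleGraph.radiusNat {V : Type*} [Fintype V] (G : SimpleGraph V) : ℕ :=
  sInf (Set.range G.eccentNat)

/-!
Every edge of `L(G)` lies in a triangle: two edges meeting at `v` are both adjacent to a third
edge at `v`, as `deg v ≥ 3`. An edge at a centre of `G` has eccentricity at most `rad G + 1` in
`L(G)`.

A connected graph in which every edge lies in a triangle is rainbow connected with `3 * r`
colours, `r` its radius. Colour by distance layers from a centre: an edge from level `i + 1` down
to level `i` gets `3 * i` or `3 * i + 1`, an edge inside level `i + 1` gets `3 * i + 2`. Each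
vertex `a` of level `i + 1` has a parent edge down, whose colour differs from that of the other
downward edges of `a` and is chosen by a two-colouring `φ` of the same-level graph in which every
non-isolated vertex has a neighbour of the other colour. Two vertices of level `i + 1` are joined by going down the parent edge of the first one,
recursing inside levels `≤ i`, and climbing to the second one by a walk coloured in
`[3 * i, 3 * i + 3)` avoiding the first colour: its parent edge, another downward edge, or a
same-level edge to a vertex of the other `φ`-colour followed by that vertex's parent edge. The
triangle on the parent edge guarantees that one of the last two exists.
-/

lemma Bool.toNat_ne_toNat {a b : Bool} (h : a ≠ b) : a.toNat ≠ b.toNat := by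
  cases a <;> cases b <;> simp_all

namespace SimpleGraph

variable {V : Type*} {G : SimpleGraph V}

lemma Reachable.exists_adj_dist_add_one_eq {u v : V} (h : G.Reachable u v) (hne : u ≠ v) :
    ∃ w, G.Adj v w ∧ G.dist u w + 1 = G.dist u v := by
  obtain ⟨p, hp⟩ := h.symm.exists_walk_length_eq_dist
  cases p with
  | nil => exact absurd rfl hne
  | @cons _ w _ hvw q =>
    refine ⟨w, hvw, ?_⟩
    have hq : G.dist u w ≤ q.length := dist_comm.trans_le (dist_le q)
    have hv := hvw.symm.diff_dist_adj (u := u)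
    rw [Walk.length_cons, dist_comm] at hp
    omega

/-- Colour each vertex by the parity of its distance to a fixed vertex of its component. -/
lemma exists_bool_forall_adj_exists_adj_ne (G : SimpleGraph V) :
    ∃ φ : V → Bool, ∀ v w, G.Adj v w → ∃ w', G.Adj v w' ∧ φ w' ≠ φ v := by
  let root : V → V := fun v => (G.connectedComponentMk v).out
  have hroot : ∀ v, G.Reachable (root v) v := fun v => ConnectedComponent.exact (Quot.out_eq _)
  have hroot_adj : ∀ {v w}, G.Adj v w → root w = root v := fun h =>
    congrArg Quot.out (ConnectedComponent.sound h.reachable).symm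
  refine ⟨fun v => decide (Even (G.dist (root v) v)), fun v w hvw => ?_⟩
  by_cases hv : root v = v
  · refine ⟨w, hvw, ?_⟩
    simp [hroot_adj hvw, hv, dist_eq_one_iff_adj.mpr hvw]
  · obtain ⟨w', hvw', hd⟩ := (hroot v).exists_adj_dist_add_one_eq hv
    refine ⟨w', hvw', ?_⟩
    simp [hroot_adj hvw', ← hd, Nat.even_add_one, -Nat.not_even_iff_odd]

def RainbowJoined (G : SimpleGraph V) (c : Sym2 V → ℕ) (k : ℕ) (u v : V) : Prop :=
  ∃ p : G.Walk u v, (∀ e ∈ p.edges, c e < k) ∧ (p.edges.map c).Nodup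

namespace RainbowJoined

variable {c : Sym2 V → ℕ} {k k' : ℕ} {u v w x : V}

lemma refl (G : SimpleGraph V) (c : Sym2 V → ℕ) (k : ℕ) (u : V) : G.RainbowJoined c k u u :=
  ⟨.nil, by simp, by simp⟩

lemma symm (h : G.RainbowJoined c k u v) : G.RainbowJoined c k v u := by
  obtain ⟨p, hpk, hpc⟩ := h
  exact ⟨p.reverse, by simpa using hpk, by simpa using hpc⟩

lemma mono (h : G.RainbowJoined c k u v) (hk : k ≤ k') : G.RainbowJoined c k' u v := by
  obtain ⟨p, hpk, hpc⟩ := h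
  exact ⟨p, fun e he => (hpk e he).trans_le hk, hpc⟩

lemma extend (h : G.RainbowJoined c k v w) (p : G.Walk u v) (q : G.Walk w x) (hk : k ≤ k')
    (hpq : ((p.edges ++ q.edges).map c).Nodup)
    (hbd : ∀ e ∈ p.edges ++ q.edges, k ≤ c e ∧ c e < k') : G.RainbowJoined c k' u x := by
  obtain ⟨r, hrk, hrc⟩ := h
  refine ⟨p.append (r.append q), fun e he => ?_, ?_⟩
  · simp only [Walk.edges_append, List.mem_append] at he
    rcases he with he | he | he
    · exact (hbd e (List.mem_append_left _ he)).2
    · exact (hrk e he).trans_le hk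
    · exact (hbd e (List.mem_append_right _ he)).2
  · rw [Walk.edges_append, Walk.edges_append,
      ((List.perm_append_comm_assoc _ _ _).map c).nodup_iff, List.map_append, List.nodup_append]
    refine ⟨hrc, hpq, fun a ha b hb hab => ?_⟩
    obtain ⟨e, he, rfl⟩ := List.mem_map.mp ha
    obtain ⟨f, hf, rfl⟩ := List.mem_map.mp hb
    have := hrk e he
    have := hbd f hf
    omega

end RainbowJoined

lemma rainbowConnectionNumber_le {k : ℕ} (hk : 0 < k) (c : Sym2 V → ℕ)
    (h : ∀ u v, G.RainbowJoined c k u v) : G.rainbowConnectionNumber ≤ k := by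
  classical
  refine Nat.sInf_le ⟨fun e => ⟨c e % k, Nat.mod_lt _ hk⟩, fun u v => ?_⟩
  obtain ⟨p, hpk, hpc⟩ := h u v
  refine ⟨p.bypass, p.bypass_isPath, p.bypass_isPath.isTrail.edges_nodup.map_on ?_⟩
  intro e he f hf hef
  have hsub := p.edges_bypass_subset_edges
  replace hef : c e % k = c f % k := congrArg Fin.val hef
  rw [Nat.mod_eq_of_lt (hpk e (hsub he)), Nat.mod_eq_of_lt (hpk f (hsub hf))] at hef
  exact List.inj_on_of_nodup_map hpc (hsub he) (hsub hf) hef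

def IsParentMap (G : SimpleGraph V) (z : V) (D : V → V) : Prop :=
  ∀ w, 0 < G.dist z w → G.Adj w (D w) ∧ G.dist z (D w) + 1 = G.dist z w

lemma exists_isParentMap (hconn : G.Preconnected) (z : V) : ∃ D, G.IsParentMap z D := by
  have hD : ∀ w, ∃ d, 0 < G.dist z w → G.Adj w d ∧ G.dist z d + 1 = G.dist z w := fun w => by
    by_cases hw : z = w
    · exact ⟨w, by simp [hw]⟩
    · obtain ⟨d, hd⟩ := (hconn z w).exists_adj_dist_add_one_eq hw
      exact ⟨d, fun _ => hd⟩
  choose D hD using hD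
  exact ⟨D, hD⟩

def levelGraph (G : SimpleGraph V) (z : V) : SimpleGraph V where
  Adj a b := G.Adj a b ∧ G.dist z a = G.dist z b
  symm := ⟨fun _ _ h => ⟨h.1.symm, h.2.symm⟩⟩
  loopless := ⟨fun _ h => G.loopless.irrefl _ h.1⟩

/-- Levels are distances from `z`. The parent edge `s(a, D a)` down from level `i + 1` gets
`3 * i + (φ a).toNat`, the other downward edges of `a` the other one of `3 * i`, `3 * i + 1`. An
edge inside level `i + 1` gets `3 * (i + 1) - 1`. -/
noncomputable def layerColor (G : SimpleGraph V) (z : V) (D : V → V) (φ : V → Bool) :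
    Sym2 V → ℕ :=
  open scoped Classical in
  Sym2.lift ⟨fun a b =>
    if G.dist z b < G.dist z a then 3 * G.dist z b + (if b = D a then φ a else !φ a).toNat
    else if G.dist z a < G.dist z b then 3 * G.dist z a + (if a = D b then φ b else !φ b).toNat
    else 3 * G.dist z a - 1,
    fun a b => by dsimp only; split_ifs <;> omega⟩

section LayerColor

variable {z : V} {D : V → V} {φ : V → Bool} {i : ℕ} {v : V}

lemma layerColor_mk_parent {a : V} (h : G.dist z (D a) < G.dist z a) :
    layerColor G z D φ s(a, D a) = 3 * G.dist z (D a) + (φ a).toNat := by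
  simp [layerColor, h]

lemma layerColor_mk_of_ne_parent {a b : V} (h : G.dist z b < G.dist z a) (hb : b ≠ D a) :
    layerColor G z D φ s(a, b) = 3 * G.dist z b + (!φ a).toNat := by
  simp [layerColor, h, hb]

lemma layerColor_mk_of_dist_eq {a b : V} (h : G.dist z a = G.dist z b) :
    layerColor G z D φ s(a, b) = 3 * G.dist z a - 1 := by
  simp [layerColor, h]

lemma IsParentMap.layerColor_parent (hD : G.IsParentMap z D) (φ : V → Bool)
    (hv : G.dist z v = i + 1) :
    G.dist z (D v) = i ∧ layerColor G z D φ s(v, D v) = 3 * i + (φ v).toNat := by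
  have hDv := (hD v (by omega)).2
  rw [layerColor_mk_parent (by omega), show G.dist z (D v) = i by omega]
  exact ⟨rfl, rfl⟩

lemma IsParentMap.exists_adj_ne_parent (hD : G.IsParentMap z D)
    (htri : ∀ a b, G.Adj a b → ∃ w, G.Adj a w ∧ G.Adj b w) (hv : G.dist z v = i + 1)
    (hlev : ∀ w, ¬(G.levelGraph z).Adj v w) : ∃ w, G.Adj v w ∧ G.dist z w = i ∧ w ≠ D v := by
  obtain ⟨hvD, hDv⟩ := hD v (by omega)
  obtain ⟨w, hvw, hDw⟩ := htri v (D v) hvD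
  have h₁ := hvw.diff_dist_adj (u := z)
  have h₂ := hDw.diff_dist_adj (u := z)
  have hw : G.dist z w ≠ i + 1 := fun hw => hlev w ⟨hvw, by omega⟩
  refine ⟨w, hvw, by omega, ?_⟩
  rintro rfl
  exact G.loopless.irrefl _ hDw

lemma IsParentMap.exists_rainbow_descent (hD : G.IsParentMap z D)
    (htri : ∀ a b, G.Adj a b → ∃ w, G.Adj a w ∧ G.Adj b w)
    (hφ : ∀ v w, (G.levelGraph z).Adj v w → ∃ w', (G.levelGraph z).Adj v w' ∧ φ w' ≠ φ v)
    (hv : G.dist z v = i + 1) (b : Bool) :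
    ∃ d, G.dist z d = i ∧ ∃ q : G.Walk d v,
      ((3 * i + b.toNat) :: q.edges.map (layerColor G z D φ)).Nodup ∧
      ∀ e ∈ q.edges, 3 * i ≤ layerColor G z D φ e ∧ layerColor G z D φ e < 3 * (i + 1) := by
  have hb₁ := Bool.toNat_le b
  by_cases hb : φ v ≠ b
  · obtain ⟨hDv, hcv⟩ := hD.layerColor_parent φ hv
    refine ⟨D v, hDv, .cons (hD v (by omega)).1.symm .nil, ?_⟩
    have := Bool.toNat_ne_toNat hb
    have := Bool.toNat_le (φ v)
    rw [Sym2.eq_swap] at hcv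
    simp [hcv]
    omega
  push Not at hb
  subst hb
  by_cases hlev : ∃ w, (G.levelGraph z).Adj v w
  · obtain ⟨w₀, hw₀⟩ := hlev
    obtain ⟨w, ⟨hvw, hdw⟩, hφw⟩ := hφ v w₀ hw₀
    obtain ⟨hDw, hcw⟩ := hD.layerColor_parent φ (hdw ▸ hv)
    have hwv : layerColor G z D φ s(w, v) = 3 * i + 2 := by
      rw [layerColor_mk_of_dist_eq (by omega)]
      omega
    refine ⟨D w, hDw, .cons (hD w (by omega)).1.symm (.cons hvw.symm .nil), ?_⟩
    have := Bool.toNat_ne_toNat hφw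
    have := Bool.toNat_le (φ w)
    rw [Sym2.eq_swap] at hcw
    simp [hwv, hcw]
    omega
  · push Not at hlev
    obtain ⟨w, hvw, hw, hne⟩ := hD.exists_adj_ne_parent htri hv hlev
    have hcw : layerColor G z D φ s(w, v) = 3 * i + (!φ v).toNat := by
      rw [Sym2.eq_swap, layerColor_mk_of_ne_parent (by omega) hne, hw]
    refine ⟨w, hw, .cons hvw.symm .nil, ?_⟩
    have := Bool.toNat_ne_toNat (Bool.not_ne_self (φ v))
    have := Bool.toNat_le (!φ v)
    simp [hcw]
    omega

theorem IsParentMap.rainbowJoined_layerColor (hD : G.IsParentMap z D) (hconn : G.Preconnected)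
    (htri : ∀ a b, G.Adj a b → ∃ w, G.Adj a w ∧ G.Adj b w)
    (hφ : ∀ v w, (G.levelGraph z).Adj v w → ∃ w', (G.levelGraph z).Adj v w' ∧ φ w' ≠ φ v)
    (i : ℕ) (u v : V) (hu : G.dist z u ≤ i) (hv : G.dist z v ≤ i) :
    G.RainbowJoined (layerColor G z D φ) (3 * i) u v := by
  induction i generalizing u v with
  | zero =>
    obtain rfl := (hconn z u).dist_eq_zero_iff.mp (by omega)
    obtain rfl := (hconn z v).dist_eq_zero_iff.mp (by omega)
    exact .refl _ _ _ _
  | succ i ih =>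
    have hup : ∀ {u x d : V} (q : G.Walk d x), G.dist z u = i + 1 → G.dist z d ≤ i →
        ((3 * i + (φ u).toNat) :: q.edges.map (layerColor G z D φ)).Nodup →
        (∀ e ∈ q.edges, 3 * i ≤ layerColor G z D φ e ∧ layerColor G z D φ e < 3 * (i + 1)) →
        G.RainbowJoined (layerColor G z D φ) (3 * (i + 1)) u x := by
      intro u x d q hu hd hqc hqb
      obtain ⟨hDu, hcu⟩ := hD.layerColor_parent φ hu
      have := Bool.toNat_le (φ u)
      refine (ih (D u) d hDu.le hd).extend (.cons (hD u (by omega)).1 .nil) q (by omega)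
        (by simpa [hcu] using hqc) ?_
      simpa [hcu] using ⟨by omega, hqb⟩
    rcases hu.lt_or_eq with hu | hu <;> rcases hv.lt_or_eq with hv | hv
    · exact (ih u v (by omega) (by omega)).mono (by omega)
    · exact (hup .nil hv (by omega) (by simp) (by simp)).symm
    · exact hup .nil hu (by omega) (by simp) (by simp)
    · obtain ⟨d, hd, q, hqc, hqb⟩ := hD.exists_rainbow_descent htri hφ hv (φ u)
      exact hup q hu hd.le hqc hqb

end LayerColor

theorem exists_forall_rainbowJoined (hconn : G.Preconnected)
    (htri : ∀ a b, G.Adj a b → ∃ w, G.Adj a w ∧ G.Adj b w) (z : V) :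
    ∃ c : Sym2 V → ℕ, ∀ i u v, G.dist z u ≤ i → G.dist z v ≤ i →
      G.RainbowJoined c (3 * i) u v := by
  obtain ⟨D, hD⟩ := exists_isParentMap hconn z
  obtain ⟨φ, hφ⟩ := (G.levelGraph z).exists_bool_forall_adj_exists_adj_ne
  exact ⟨layerColor G z D φ, hD.rainbowJoined_layerColor hconn htri hφ⟩

section Radius

variable [Fintype V]

lemma dist_le_eccentNat (x y : V) : G.dist x y ≤ G.eccentNat x :=
  Finset.le_sup (f := G.dist x) (Finset.mem_univ y)

lemma radiusNat_le_eccentNat (x : V) : G.radiusNat ≤ G.eccentNat x :=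
  Nat.sInf_le ⟨x, rfl⟩

lemma exists_eccentNat_eq_radiusNat [Nonempty V] : ∃ x, G.eccentNat x = G.radiusNat :=
  Nat.sInf_mem (Set.range_nonempty _)

lemma radiusNat_pos [Nontrivial V] (hconn : G.Preconnected) : 0 < G.radiusNat := by
  obtain ⟨z, hz⟩ := G.exists_eccentNat_eq_radiusNat
  obtain ⟨v, hv⟩ := exists_ne z
  exact hz ▸ ((hconn z v).pos_dist_of_ne hv.symm).trans_le (G.dist_le_eccentNat z v)

theorem rainbowConnectionNumber_le_three_mul_radiusNat [Nontrivial V] (hconn : G.Preconnected)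
    (htri : ∀ a b, G.Adj a b → ∃ w, G.Adj a w ∧ G.Adj b w) :
    G.rainbowConnectionNumber ≤ 3 * G.radiusNat := by
  obtain ⟨z, hz⟩ := G.exists_eccentNat_eq_radiusNat
  obtain ⟨c, hc⟩ := exists_forall_rainbowJoined hconn htri z
  refine rainbowConnectionNumber_le (by have := radiusNat_pos hconn; omega) c fun u v => ?_
  exact hc _ u v (hz ▸ G.dist_le_eccentNat z u) (hz ▸ G.dist_le_eccentNat z v)

end Radius

lemma Walk.exists_lineGraph_walk_length_le {u x : V} (p : G.Walk u x) (e f : G.edgeSet)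
    (hu : u ∈ (e : Sym2 V)) (hx : x ∈ (f : Sym2 V)) :
    ∃ q : G.lineGraph.Walk e f, q.length ≤ p.length + 1 := by
  induction p generalizing e with
  | nil =>
    by_cases hef : e = f
    · exact ⟨hef ▸ .nil, by subst hef; simp⟩
    · exact ⟨.cons (lineGraph_adj_iff_exists.mpr ⟨hef, _, hu, hx⟩) .nil, by simp⟩
  | @cons a b x hab p ih =>
    obtain ⟨q, hq⟩ := ih ⟨s(a, b), hab⟩ (Sym2.mem_mk_right a b) hx
    by_cases he : e = ⟨s(a, b), hab⟩
    · exact ⟨he ▸ q, by subst he; simp only [Walk.length_cons]; omega⟩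
    · refine ⟨.cons (lineGraph_adj_iff_exists.mpr ⟨he, a, hu, Sym2.mem_mk_left a b⟩) q, ?_⟩
      simp only [Walk.length_cons]
      omega

lemma lineGraph_dist_le {u x : V} (h : G.Reachable u x) {e f : G.edgeSet}
    (hu : u ∈ (e : Sym2 V)) (hx : x ∈ (f : Sym2 V)) :
    G.lineGraph.dist e f ≤ G.dist u x + 1 := by
  obtain ⟨p, hp⟩ := h.exists_walk_length_eq_dist
  obtain ⟨q, hq⟩ := p.exists_lineGraph_walk_length_le e f hu hx
  exact (dist_le q).trans (hp ▸ hq)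

lemma lineGraph_preconnected (h : G.Preconnected) : G.lineGraph.Preconnected := fun e f =>
  let ⟨q, _⟩ := (h _ _).some.exists_lineGraph_walk_length_le e f
    (Sym2.out_fst_mem (e : Sym2 V)) (Sym2.out_fst_mem (f : Sym2 V))
  q.reachable

lemma exists_lineGraph_adj_adj [G.LocallyFinite] (hδ : ∀ v, 3 ≤ G.degree v) {e₁ e₂ : G.edgeSet}
    (h : G.lineGraph.Adj e₁ e₂) : ∃ e₃, G.lineGraph.Adj e₁ e₃ ∧ G.lineGraph.Adj e₂ e₃ := by
  classical
  obtain ⟨-, v, hv₁, hv₂⟩ := lineGraph_adj_iff_exists.mp h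
  obtain ⟨e₃, he₃, he₃'⟩ := Finset.exists_mem_notMem_of_card_lt_card
    (s := ({(e₁ : Sym2 V), (e₂ : Sym2 V)} : Finset (Sym2 V))) (t := G.incidenceFinset v)
    (by rw [card_incidenceFinset_eq_degree]; exact Finset.card_le_two.trans_lt (hδ v))
  rw [mem_incidenceFinset] at he₃
  simp only [Finset.mem_insert, Finset.mem_singleton, not_or] at he₃'
  refine ⟨⟨e₃, he₃.1⟩, lineGraph_adj_iff_exists.mpr ⟨?_, v, hv₁, he₃.2⟩,
    lineGraph_adj_iff_exists.mpr ⟨?_, v, hv₂, he₃.2⟩⟩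
  · exact fun h => he₃'.1 (congrArg Subtype.val h).symm
  · exact fun h => he₃'.2 (congrArg Subtype.val h).symm

lemma nontrivial_edgeSet_of_one_lt_degree {v : V} [Fintype (G.neighborSet v)]
    (h : 1 < G.degree v) : Nontrivial G.edgeSet := by
  obtain ⟨a, ha, b, hb, hab⟩ := Finset.one_lt_card.mp (G.card_neighborFinset_eq_degree v ▸ h)
  rw [mem_neighborFinset] at ha hb
  exact ⟨⟨s(v, a), ha⟩, ⟨s(v, b), hb⟩, fun h => hab (Sym2.congr_right.mp (congrArg Subtype.val h))⟩

lemma radiusNat_lineGraph_le [Fintype V] [Fintype G.edgeSet] (hconn : G.Connected)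
    (hadj : ∀ v, ∃ w, G.Adj v w) : G.lineGraph.radiusNat ≤ G.radiusNat + 1 := by
  have := hconn.nonempty
  obtain ⟨z, hz⟩ := G.exists_eccentNat_eq_radiusNat
  obtain ⟨w, hzw⟩ := hadj z
  refine (G.lineGraph.radiusNat_le_eccentNat ⟨s(z, w), hzw⟩).trans (Finset.sup_le fun f _ => ?_)
  obtain ⟨x, hx⟩ : ∃ x, x ∈ (f : Sym2 V) := ⟨_, Sym2.out_fst_mem _⟩
  have := lineGraph_dist_le (hconn.preconnected z x) (e := ⟨s(z, w), hzw⟩) (Sym2.mem_mk_left z w) hx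
  have := G.dist_le_eccentNat z x
  omega

end SimpleGraph

open SimpleGraph

theorem rc_lineGraph_le_general {V : Type*} [Fintype V] (G : SimpleGraph V)
    [DecidableRel G.Adj] (hc : G.Connected) (hδ : ∀ v : V, 3 ≤ G.degree v) :
    G.lineGraph.rainbowConnectionNumber ≤ 3 * G.lineGraph.radiusNat ∧
      3 * G.lineGraph.radiusNat ≤ 3 * (G.radiusNat + 1) := by
  obtain ⟨v⟩ := hc.nonempty
  have : Nontrivial G.edgeSet := nontrivial_edgeSet_of_one_lt_degree (v := v) (by have := hδ v; omega)
  refine ⟨rainbowConnectionNumber_le_three_mul_radiusNat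
    (lineGraph_preconnected hc.preconnected) fun _ _ => exists_lineGraph_adj_adj hδ, ?_⟩
  exact Nat.mul_le_mul_left 3 <| radiusNat_lineGraph_le hc fun v =>
    (G.degree_pos_iff_exists_adj v).mp (by have := hδ v; omega)

/-- For a connected graph `G` with minimum degree at least `3`, the
line graph `L(G)` satisfies `rc(L(G)) ≤ 3 · rad(L(G)) ≤ 3 · (rad(G) + 1)`. -/
theorem rc_lineGraph_le {V : Type*} [Fintype V] [DecidableEq V] (G : SimpleGraph V)
    [DecidableRel G.Adj] (hc : G.Connected) (hδ : ∀ v : V, 3 ≤ G.degree v) :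
    G.lineGraph.rainbowConnectionNumber ≤ 3 * G.lineGraph.radiusNat ∧
      3 * G.lineGraph.radiusNat ≤ 3 * (G.radiusNat + 1) :=
  rc_lineGraph_le_general G hc hδ
end

section
/- Let G be a finite simple graph containing a vertex x adjacent to every other vertex of G, and suppose the subgraph of G induced by N(x) has no isolated vertex. Then the rainbow connection number of G satisfies rc(G) ≤ 3. -/
namespace SimpleGraph

variable {V : Type*} (G : SimpleGraph V)

section MaxCut

noncomputable def cutSize (f : V → Bool) : ℕ :=
  {p : V × V | G.Adj p.1 p.2 ∧ f p.1 ≠ f p.2}.ncard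

variable {G}

/-- Flipping `v` adds every edge at `v` to the cut and removes none. -/
theorem cutSize_lt_cutSize_update_not [Finite V] [DecidableEq V] {f : V → Bool} {v w : V}
    (hvw : G.Adj v w) (hv : ∀ w, G.Adj v w → f v = f w) :
    G.cutSize f < G.cutSize (Function.update f v (!f v)) := by
  refine Set.ncard_lt_ncard ⟨fun p ⟨hadj, hne⟩ => ?_, fun hsub => ?_⟩
  · have h₁ : p.1 ≠ v := by rintro rfl; exact hne (hv _ hadj)
    have h₂ : p.2 ≠ v := by rintro rfl; exact hne (hv _ hadj.symm).symm
    exact ⟨hadj, by simpa [Function.update_of_ne h₁, Function.update_of_ne h₂] using hne⟩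
  · have hwv : w ≠ v := hvw.ne.symm
    have hcross : (v, w) ∈ {p : V × V | G.Adj p.1 p.2 ∧
        Function.update f v (!f v) p.1 ≠ Function.update f v (!f v) p.2} :=
      ⟨hvw, by simp [Function.update_of_ne hwv, hv w hvw]⟩
    exact (hsub hcross).2 (hv w hvw)

theorem exists_forall_adj_exists_adj_ne [Finite V] :
    ∃ f : V → Bool, ∀ v w, G.Adj v w → ∃ w', G.Adj v w' ∧ f v ≠ f w' := by
  classical
  obtain ⟨f, hmax⟩ := Finite.exists_max G.cutSize
  refine ⟨f, fun v w hvw => ?_⟩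
  by_contra! hv
  exact (cutSize_lt_cutSize_update_not hvw hv).not_ge (hmax _)

end MaxCut

section RainbowPaths

variable {G} {k : ℕ} (c : Sym2 V → Fin k)

theorem rainbowConnectionNumber_le_s10 (hc : G.IsRainbowColoring c) : G.rainbowConnectionNumber ≤ k :=
  Nat.sInf_le ⟨c, hc⟩

theorem exists_rainbow_path_of_adj {u v : V} (huv : G.Adj u v) :
    ∃ p : G.Walk u v, p.IsPath ∧ (p.edges.map c).Nodup :=
  ⟨.cons huv .nil, by simp [Walk.isPath_def, huv.ne], by simp⟩

theorem exists_rainbow_path_of_adj_adj {u x v : V} (hux : G.Adj u x) (hxv : G.Adj x v)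
    (huv : u ≠ v) (hc : c s(u, x) ≠ c s(x, v)) :
    ∃ p : G.Walk u v, p.IsPath ∧ (p.edges.map c).Nodup :=
  ⟨.cons hux (.cons hxv .nil), by simp [Walk.isPath_def, hux.ne, hxv.ne, huv], by simp [hc]⟩

theorem exists_rainbow_path_of_adj_adj_adj {u x z v : V} (hux : G.Adj u x) (hxz : G.Adj x z)
    (hzv : G.Adj z v) (huz : u ≠ z) (huv : u ≠ v) (hxv : x ≠ v)
    (h₁ : c s(u, x) ≠ c s(x, z)) (h₂ : c s(u, x) ≠ c s(z, v))
    (h₃ : c s(x, z) ≠ c s(z, v)) :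
    ∃ p : G.Walk u v, p.IsPath ∧ (p.edges.map c).Nodup :=
  ⟨.cons hux (.cons hxz (.cons hzv .nil)),
    by simp [Walk.isPath_def, hux.ne, hxz.ne, hzv.ne, huz, huv, hxv],
    by simp [h₁, h₂, h₃]⟩

end RainbowPaths

section StarColoring

variable [DecidableEq V]

def starColoring (x : V) (f : V → Bool) : Sym2 V → Fin 3 :=
  Sym2.lift ⟨fun u v => if u = x then cond (f v) 0 1 else if v = x then cond (f u) 0 1 else 2,
    fun u v => by by_cases hu : u = x <;> by_cases hv : v = x <;> simp [hu, hv]⟩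

variable {G} {x : V} {f : V → Bool}

@[simp]
theorem starColoring_mk_left (v : V) : starColoring x f s(x, v) = cond (f v) 0 1 := by
  simp [starColoring]

@[simp]
theorem starColoring_mk_right (v : V) : starColoring x f s(v, x) = cond (f v) 0 1 := by
  rw [Sym2.eq_swap, starColoring_mk_left]

theorem starColoring_mk_of_ne {u v : V} (hu : u ≠ x) (hv : v ≠ x) :
    starColoring x f s(u, v) = 2 := by
  simp [starColoring, hu, hv]

theorem isRainbowColoring_starColoring (hx : ∀ y, y ≠ x → G.Adj x y)
    (hf : ∀ v, v ≠ x → ∃ z, z ≠ x ∧ G.Adj z v ∧ f z ≠ f v) :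
    G.IsRainbowColoring (starColoring x f) := by
  intro u v
  rcases eq_or_ne u v with rfl | huv
  · exact ⟨.nil, .nil, by simp⟩
  rcases eq_or_ne u x with rfl | hu
  · exact exists_rainbow_path_of_adj _ (hx v huv.symm)
  rcases eq_or_ne v x with rfl | hv
  · exact exists_rainbow_path_of_adj _ (hx u hu).symm
  by_cases hside : f u = f v
  · obtain ⟨z, hz, hzv, hfz⟩ := hf v hv
    have huz : u ≠ z := by rintro rfl; exact hfz hside
    refine exists_rainbow_path_of_adj_adj_adj _ (hx u hu).symm (hx z hz) hzv huz huv hv.symm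
      ?_ ?_ ?_ <;> cases hfu : f u <;> cases hfz' : f z <;>
      simp_all [starColoring_mk_of_ne hz hv]
  · exact exists_rainbow_path_of_adj_adj _ (hx u hu).symm (hx v hv) huv
      (by cases hfu : f u <;> cases hfv : f v <;> simp_all)

end StarColoring

end SimpleGraph

/-- If some vertex `x` is adjacent to every other vertex of `G` and
the subgraph induced by `N(x)` has no isolated vertex, then `rc(G) ≤ 3`. -/
theorem rc_le_three_of_dominating_vertex {V : Type*} [Fintype V] (G : SimpleGraph V)
    (x : V) (hx : ∀ y : V, y ≠ x → G.Adj x y)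
    (hiso : ∀ y : V, G.Adj x y → ∃ z : V, G.Adj x z ∧ G.Adj y z) :
    G.rainbowConnectionNumber ≤ 3 := by
  classical
  obtain ⟨f, hf⟩ := (G.deleteIncidenceSet x).exists_forall_adj_exists_adj_ne
  refine SimpleGraph.rainbowConnectionNumber_le_s10 (SimpleGraph.starColoring x f)
    (SimpleGraph.isRainbowColoring_starColoring hx fun v hv => ?_)
  obtain ⟨z, hxz, hvz⟩ := hiso v (hx v hv)
  obtain ⟨w, hvw, hfw⟩ :=
    hf v z (SimpleGraph.deleteIncidenceSet_adj.2 ⟨hvz, hv, hxz.ne.symm⟩)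
  obtain ⟨hvw, -, hw⟩ := SimpleGraph.deleteIncidenceSet_adj.1 hvw
  exact ⟨w, hw, hvw.symm, hfw.symm⟩
end

section
/- For every positive integer r there exists a bridgeless finite simple graph G in which every edge is contained in a triangle, with radius rad(G) = r, and whose rainbow connection number satisfies 3r − 1 ≤ rc(G) ≤ 3r. (Explicitly: for 1 ≤ i ≤ (3r−1)^r + 1, take a path u^i_0, u^i_1, …, u^i_r, add vertices v^i_j adjacent to u^i_{j−1} and u^i_j for j = 1, …, r, and identify all the vertices u^i_0 into a single vertex u_0; the resulting graph G has radius r, center u_0, and 3r − 1 ≤ rc(G) ≤ 3r.) -/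
/-- The eccentricity of a vertex: the largest distance to another vertex. -/
noncomputable def SimpleGraph.finEccent {V : Type*} [Fintype V] (G : SimpleGraph V) (x : V) : ℕ :=
  Finset.univ.sup fun y => G.dist x y

/-- The radius of a graph: the least eccentricity of a vertex. -/
noncomputable def SimpleGraph.finRadius {V : Type*} [Fintype V] (G : SimpleGraph V) : ℕ :=
  sInf (Set.range G.finEccent)

/-!
Glue `N = (3r - 1) ^ r + 1` triangular snakes of length `r` at a common end `u₀`, and colour
the level-`τ` triangle of every snake with `3τ, 3τ + 1, 3τ + 2`. A vertex is reached from `u₀` by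
crossing each level either along the spine edge `u_τ u_{τ+1}` or along the other two edges of the
triangle; two such routes making complementary choices level by level use disjoint colours, so
`rc ≤ 3r`. Conversely, a colouring with fewer than `3r` colours gives the spine edges of two snakes
the same colours (pigeonhole). A rainbow path between the tips of these snakes crosses every level
of both, each time by the spine edge or by both other edges, and cannot use both spine edges of a
level; so it has at least `3` edges per level, `3r` in all. Hence `rc = 3r`. The radius is `r`,
attained at `u₀`: the height, counted positively on one snake and negatively elsewhere, changes by
at most `2` along an edge.
-/

namespace SimpleGraph

variable {V W : Type*} {G : SimpleGraph V} {H : SimpleGraph W}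

theorem bridgeless_of_forall_adj_exists_common_adj (hG : G.Connected)
    (h : ∀ u v, G.Adj u v → ∃ w, G.Adj u w ∧ G.Adj v w) : G.Bridgeless := by
  refine ⟨hG, fun e he => ?_⟩
  induction e with
  | h u v =>
    obtain ⟨w, huw, hvw⟩ := h u v he
    rw [isBridge_iff_forall_walk_mem_edges]
    intro hall
    have := hall (.cons huw (.cons hvw.symm .nil))
    simp [huw.ne, hvw.ne, (G.ne_of_adj he).symm] at this

theorem Walk.exists_isPath_nodup_map_edges {α : Type*} {u v : V} (f : Sym2 V → α)
    (p : G.Walk u v) (hp : (p.edges.map f).Nodup) :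
    ∃ q : G.Walk u v, q.IsPath ∧ (q.edges.map f).Nodup := by
  classical
  refine ⟨p.bypass, p.bypass_isPath, p.bypass_isPath.isTrail.edges_nodup.map_on ?_⟩
  exact fun e he e' he' => List.inj_on_of_nodup_map hp (p.edges_bypass_subset_edges he)
    (p.edges_bypass_subset_edges he')

theorem exists_isRainbowColoring_of_forall_exists_walk {k : ℕ} (hk : 0 < k) (c : Sym2 V → ℕ)
    (hc : ∀ e ∈ G.edgeSet, c e < k)
    (h : ∀ u v, ∃ p : G.Walk u v, (p.edges.map c).Nodup) :
    ∃ c' : Sym2 V → Fin k, G.IsRainbowColoring c' := by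
  refine ⟨fun e => ⟨c e % k, Nat.mod_lt _ hk⟩, fun u v => ?_⟩
  obtain ⟨p, hp⟩ := h u v
  apply p.exists_isPath_nodup_map_edges
  refine List.Nodup.of_map Fin.val ?_
  rw [List.map_map]
  convert hp using 1
  exact List.map_congr_left fun e he => Nat.mod_eq_of_lt (hc e (p.edges_subset_edgeSet he))

theorem rainbowConnectionNumber_eq {k : ℕ} {c : Sym2 V → Fin k} (hc : G.IsRainbowColoring c)
    (hmin : ∀ (m : ℕ) (c' : Sym2 V → Fin m), G.IsRainbowColoring c' → k ≤ m) :
    G.rainbowConnectionNumber = k :=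
  le_antisymm (Nat.sInf_le ⟨c, hc⟩) (le_csInf ⟨k, c, hc⟩ fun m ⟨c', hc'⟩ => hmin m c' hc')

theorem Walk.le_add_mul_length (f : V → ℤ) {d : ℤ} (hf : ∀ x y, G.Adj x y → f y ≤ f x + d)
    {u v : V} (p : G.Walk u v) : f v ≤ f u + d * p.length := by
  induction p with
  | nil => simp
  | cons h p ih =>
    have := hf _ _ h
    push_cast [Walk.length_cons]
    linarith

theorem Reachable.le_add_mul_dist (f : V → ℤ) {d : ℤ} (hf : ∀ x y, G.Adj x y → f y ≤ f x + d)
    {u v : V} (huv : G.Reachable u v) : f v ≤ f u + d * G.dist u v := by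
  obtain ⟨p, hp⟩ := huv.exists_walk_length_eq_dist
  simpa [hp] using p.le_add_mul_length f hf

section Fintype

variable [Fintype V]

theorem finEccent_le {x : V} {m : ℕ} (h : ∀ y, G.dist x y ≤ m) : G.finEccent x ≤ m :=
  Finset.sup_le fun y _ => h y

theorem le_finEccent {x y : V} {m : ℕ} (h : m ≤ G.dist x y) : m ≤ G.finEccent x :=
  h.trans (Finset.le_sup (f := fun y => G.dist x y) (Finset.mem_univ y))

theorem finRadius_eq {x : V} {m : ℕ} (hx : G.finEccent x = m) (h : ∀ y, m ≤ G.finEccent y) :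
    G.finRadius = m :=
  le_antisymm (Nat.sInf_le ⟨x, hx⟩) (le_csInf ⟨m, x, hx⟩ (by rintro _ ⟨y, rfl⟩; exact h y))

end Fintype

namespace Iso

theorem isRainbowColoring_comp (e : G ≃g H) {k : ℕ} {c : Sym2 W → Fin k}
    (hc : H.IsRainbowColoring c) :
    G.IsRainbowColoring (c ∘ Sym2.map e) := by
  intro u v
  obtain ⟨p, hp, hpc⟩ := hc (e u) (e v)
  refine ⟨(p.map e.symm.toHom).copy (e.symm_apply_apply u) (e.symm_apply_apply v),
    by simpa using hp.map e.symm.injective, ?_⟩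
  rw [Walk.edges_copy, Walk.edges_map, List.map_map]
  convert hpc using 2
  ext d
  simp [Sym2.map_map, Function.comp_def]

theorem rainbowConnectionNumber_eq (e : G ≃g H) :
    G.rainbowConnectionNumber = H.rainbowConnectionNumber := by
  unfold rainbowConnectionNumber
  congr 1
  ext k
  exact ⟨fun ⟨c, hc⟩ => ⟨_, isRainbowColoring_comp e.symm hc⟩,
    fun ⟨c, hc⟩ => ⟨_, isRainbowColoring_comp e hc⟩⟩

theorem dist_eq (e : G ≃g H) (u v : V) : H.dist (e u) (e v) = G.dist u v := by
  rw [dist_eq_sInf, dist_eq_sInf]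
  congr 1
  ext n
  constructor
  · rintro ⟨q, rfl⟩
    exact ⟨(q.map e.symm.toHom).copy (e.symm_apply_apply u) (e.symm_apply_apply v), by simp⟩
  · rintro ⟨p, rfl⟩
    exact ⟨p.map e.toHom, by simp⟩

theorem forall_adj_exists_common_adj (e : G ≃g H)
    (h : ∀ u v, G.Adj u v → ∃ w, G.Adj u w ∧ G.Adj v w) (u v : W) (huv : H.Adj u v) : ∃ w, H.Adj u w ∧ H.Adj v w := by
  obtain ⟨w, huw, hvw⟩ := h _ _ (e.symm.map_adj_iff.2 huv)
  exact ⟨e w, by simpa using e.map_adj_iff.2 huw, by simpa using e.map_adj_iff.2 hvw⟩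

variable [Fintype V] [Fintype W]

theorem finEccent_eq (e : G ≃g H) (x : V) : H.finEccent (e x) = G.finEccent x := by
  unfold finEccent
  rw [← Finset.map_univ_equiv e.toEquiv, Finset.sup_map]
  simp [Function.comp_def, e.dist_eq]

theorem finRadius_eq (e : G ≃g H) : H.finRadius = G.finRadius := by
  unfold finRadius
  rw [← e.toEquiv.surjective.range_comp H.finEccent]
  exact congrArg (sInf ∘ Set.range) (funext e.finEccent_eq)

end Iso

end SimpleGraph

namespace SnakeBouquet

open SimpleGraph

/-- `none` is the common vertex `u₀`; `some (i, s)` is the vertex of snake `i` at height `s + 1`,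
the vertex at height `2j` being `u_j` and the one at height `2j - 1` being `v_j`. -/
abbrev Vertex (N r : ℕ) := Option (Fin N × Fin (2 * r))

variable {N r : ℕ}

/-- The vertex of snake `i` at height `a`; junk value `u₀` for `a > 2r`. -/
def vtx (i : Fin N) (a : ℕ) : Vertex N r :=
  if h : 0 < a ∧ a ≤ 2 * r then some (i, ⟨a - 1, by omega⟩) else none

def height : Vertex N r → ℕ
  | none => 0
  | some (_, s) => s + 1

def signedHeight (i : Fin N) : Vertex N r → ℤ
  | none => 0
  | some (j, s) => if j = i then s + 1 else -(s + 1)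

@[simp]
theorem vtx_zero (i : Fin N) : (vtx i 0 : Vertex N r) = none := by
  simp [vtx]

theorem height_vtx (i : Fin N) {a : ℕ} (ha : a ≤ 2 * r) : height (vtx i a : Vertex N r) = a := by
  unfold vtx
  split_ifs <;> simp only [height] <;> omega

theorem signedHeight_vtx (i j : Fin N) {a : ℕ} (ha : a ≤ 2 * r) :
    signedHeight i (vtx j a : Vertex N r) = if j = i then (a : ℤ) else -a := by
  unfold vtx
  split_ifs with h hji hji <;> simp only [signedHeight, hji, if_true, if_false] <;> omega

theorem exists_eq_vtx (i₀ : Fin N) (x : Vertex N r) : ∃ i a, a ≤ 2 * r ∧ x = vtx i a := by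
  rcases x with _ | ⟨i, s⟩
  · exact ⟨i₀, 0, Nat.zero_le _, (vtx_zero i₀).symm⟩
  · refine ⟨i, s + 1, s.2, ?_⟩
    simp [vtx]

theorem vtx_ne_vtx {i j : Fin N} (hij : i ≠ j) {a b : ℕ} (ha : 0 < a) (ha' : a ≤ 2 * r)
    (hb : b ≤ 2 * r) : (vtx i a : Vertex N r) ≠ vtx j b := by
  intro h
  have := congrArg (signedHeight i) h
  rw [signedHeight_vtx i i ha', signedHeight_vtx i j hb, if_pos rfl, if_neg hij.symm] at this
  omega

def Step (a b : ℕ) : Prop := b = a + 1 ∨ Even a ∧ b = a + 2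

def graph (N r : ℕ) : SimpleGraph (Vertex N r) :=
  SimpleGraph.fromRel fun x y => ∃ i a b, Step a b ∧ b ≤ 2 * r ∧ x = vtx i a ∧ y = vtx i b

theorem adj_vtx (i : Fin N) {a b : ℕ} (hab : Step a b) (hb : b ≤ 2 * r) :
    (graph N r).Adj (vtx i a) (vtx i b) := by
  refine ⟨fun h => ?_, Or.inl ⟨i, a, b, hab, hb, rfl, rfl⟩⟩
  have := congrArg height h
  rw [height_vtx i (by rcases hab with h | ⟨-, h⟩ <;> omega), height_vtx i hb] at this
  rcases hab with h | ⟨-, h⟩ <;> omega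

theorem exists_step_of_adj {x y : Vertex N r} (h : (graph N r).Adj x y) :
    ∃ i a b, Step a b ∧ b ≤ 2 * r ∧
      (x = vtx i a ∧ y = vtx i b ∨ x = vtx i b ∧ y = vtx i a) := by
  obtain ⟨-, ⟨i, a, b, hab, hb, rfl, rfl⟩ | ⟨i, a, b, hab, hb, rfl, rfl⟩⟩ := h
  exacts [⟨i, a, b, hab, hb, .inl ⟨rfl, rfl⟩⟩, ⟨i, a, b, hab, hb, .inr ⟨rfl, rfl⟩⟩]

theorem Step.lt_and_le_add_two {a b : ℕ} (h : Step a b) : a < b ∧ b ≤ a + 2 := by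
  rcases h with h | ⟨-, h⟩ <;> omega

theorem exists_common_adj_vtx (i : Fin N) {a b : ℕ} (hab : Step a b) (hb : b ≤ 2 * r) :
    ∃ w, (graph N r).Adj (vtx i a) w ∧ (graph N r).Adj (vtx i b) w := by
  rcases hab with rfl | ⟨⟨t, rfl⟩, rfl⟩
  · rcases Nat.even_or_odd a with ⟨t, rfl⟩ | ⟨t, rfl⟩
    · exact ⟨vtx i (t + t + 2), adj_vtx i (.inr ⟨⟨t, rfl⟩, rfl⟩) (by omega),
        adj_vtx i (.inl rfl) (by omega)⟩
    · exact ⟨vtx i (2 * t), (adj_vtx i (.inl rfl) (by omega)).symm,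
        (adj_vtx i (.inr ⟨⟨t, by omega⟩, rfl⟩) (by omega)).symm⟩
  · exact ⟨vtx i (t + t + 1), adj_vtx i (.inl rfl) (by omega),
      (adj_vtx i (.inl rfl) hb).symm⟩

theorem exists_common_adj {x y : Vertex N r} (h : (graph N r).Adj x y) :
    ∃ w, (graph N r).Adj x w ∧ (graph N r).Adj y w := by
  obtain ⟨i, a, b, hab, hb, ⟨rfl, rfl⟩ | ⟨rfl, rfl⟩⟩ := exists_step_of_adj h
  · exact exists_common_adj_vtx i hab hb
  · obtain ⟨w, ha, hb⟩ := exists_common_adj_vtx i hab hb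
    exact ⟨w, hb, ha⟩

/-- In every branch the triangle between heights `2τ` and `2τ + 2` gets the colours `3τ`
(heights `2τ, 2τ + 1`), `3τ + 1` (heights `2τ, 2τ + 2`) and `3τ + 2` (heights `2τ + 1, 2τ + 2`);
each is determined by the sum of the heights of its ends. -/
def color : Sym2 (Vertex N r) → ℕ :=
  Sym2.lift ⟨fun x y => height x + height y - 1 - (height x + height y) / 4,
    fun x y => by simp only [Nat.add_comm (height x)]⟩

theorem color_vtx (i j : Fin N) {a b : ℕ} (ha : a ≤ 2 * r) (hb : b ≤ 2 * r) :
    color s((vtx i a : Vertex N r), vtx j b) = a + b - 1 - (a + b) / 4 := by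
  simp [color, height_vtx i ha, height_vtx j hb]

theorem color_lower {i j : Fin N} {τ : ℕ} (hτ : τ < r) :
    color s((vtx i (2 * τ) : Vertex N r), vtx j (2 * τ + 1)) = 3 * τ := by
  rw [color_vtx i j (by omega) (by omega)]; omega

theorem color_spine {i j : Fin N} {τ : ℕ} (hτ : τ < r) :
    color s((vtx i (2 * τ) : Vertex N r), vtx j (2 * τ + 2)) = 3 * τ + 1 := by
  rw [color_vtx i j (by omega) (by omega)]; omega

theorem color_upper {i j : Fin N} {τ : ℕ} (hτ : τ < r) :
    color s((vtx i (2 * τ + 1) : Vertex N r), vtx j (2 * τ + 2)) = 3 * τ + 2 := by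
  rw [color_vtx i j (by omega) (by omega)]; omega

theorem color_lt {e : Sym2 (Vertex N r)} (he : e ∈ (graph N r).edgeSet) : color e < 3 * r := by
  induction e with
  | h x y =>
    obtain ⟨i, a, b, hab, hb, ⟨rfl, rfl⟩ | ⟨rfl, rfl⟩⟩ := exists_step_of_adj he <;>
    · rw [color_vtx] <;> rcases hab with h | ⟨⟨t, rfl⟩, h⟩ <;> omega

def rungColors (σ : ℕ → Bool) (τ : ℕ) : List ℕ :=
  if σ τ then [3 * τ + 1] else [3 * τ, 3 * τ + 2]

def topColors (σ : ℕ → Bool) (τ : ℕ) : List ℕ :=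
  if σ τ then [3 * τ] else [3 * τ + 1, 3 * τ + 2]

theorem of_mem_rungColors {σ : ℕ → Bool} {τ c : ℕ} (hc : c ∈ rungColors σ τ) :
    c / 3 = τ ∧ (σ τ ↔ c % 3 = 1) := by
  unfold rungColors at hc
  split_ifs at hc with h <;> simp at hc <;> simp [h] <;> omega

theorem of_mem_topColors {σ : ℕ → Bool} {τ c : ℕ} (hc : c ∈ topColors σ τ) :
    c / 3 = τ ∧ (σ τ ↔ c % 3 = 0) := by
  unfold topColors at hc
  split_ifs at hc with h <;> simp at hc <;> simp [h] <;> omega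

def rung (i : Fin N) (σ : ℕ → Bool) (k : ℕ) (hk : k < r) :
    (graph N r).Walk (vtx i (2 * k)) (vtx i (2 * k + 2)) :=
  if σ k then (adj_vtx i (.inr ⟨⟨k, by omega⟩, rfl⟩) (by omega)).toWalk
  else .cons (adj_vtx i (.inl rfl) (by omega)) (adj_vtx i (.inl rfl) (by omega)).toWalk

def top (i : Fin N) (σ : ℕ → Bool) (k : ℕ) (hk : k < r) :
    (graph N r).Walk (vtx i (2 * k)) (vtx i (2 * k + 1)) :=
  if σ k then (adj_vtx i (.inl rfl) (by omega)).toWalk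
  else .cons (adj_vtx i (.inr ⟨⟨k, by omega⟩, rfl⟩) (by omega))
    (adj_vtx i (.inl rfl) (by omega)).symm.toWalk

def climb (i : Fin N) (σ : ℕ → Bool) : (k : ℕ) → k ≤ r → (graph N r).Walk (vtx i 0) (vtx i (2 * k))
  | 0, _ => .nil
  | k + 1, hk => (climb i σ k (by omega)).append (rung i σ k (by omega))

theorem map_color_edges_rung (i : Fin N) (σ : ℕ → Bool) {k : ℕ} (hk : k < r) :
    (rung i σ k hk).edges.map color = rungColors σ k := by
  unfold rung rungColors
  split_ifs <;> simp [color_lower hk, color_spine hk, color_upper hk]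

theorem map_color_edges_top (i : Fin N) (σ : ℕ → Bool) {k : ℕ} (hk : k < r) :
    (top i σ k hk).edges.map color = topColors σ k := by
  unfold top topColors
  split_ifs <;> simp [color_lower hk, color_spine hk, Sym2.eq_swap (a := vtx i (2 * k + 2)),
    color_upper hk]

theorem map_color_edges_climb (i : Fin N) (σ : ℕ → Bool) {k : ℕ} (hk : k ≤ r) :
    (climb i σ k hk).edges.map color = (List.range k).flatMap (rungColors σ) := by
  induction k with
  | zero => rfl
  | succ k ih =>
    rw [climb, Walk.edges_append, List.map_append, ih, map_color_edges_rung, List.range_succ,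
      List.flatMap_append, List.flatMap_singleton]

/-- The colour type (`c % 3`) of the edge by which a route to height `a` crosses the level-`τ`
triangle when it uses a single edge there. -/
def soloType (a τ : ℕ) : ℕ := if 2 * τ + 1 = a then 0 else 1

theorem pairwise_lt_flatMap_rungColors (σ : ℕ → Bool) (k : ℕ) :
    ((List.range k).flatMap (rungColors σ)).Pairwise (· < ·) := by
  refine List.pairwise_flatMap.2 ⟨fun τ _ => ?_, ?_⟩
  · unfold rungColors; split_ifs <;> simp
  · refine List.pairwise_lt_range.imp fun hlt c hc c' hc' => ?_
    have := (of_mem_rungColors hc).1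
    have := (of_mem_rungColors hc').1
    omega

theorem of_mem_flatMap_rungColors {σ : ℕ → Bool} {k c : ℕ}
    (hc : c ∈ (List.range k).flatMap (rungColors σ)) : c / 3 < k ∧ (σ (c / 3) ↔ c % 3 = 1) := by
  obtain ⟨τ, hτ, hc⟩ := List.mem_flatMap.1 hc
  obtain ⟨rfl, h⟩ := of_mem_rungColors hc
  exact ⟨List.mem_range.1 hτ, h⟩

theorem exists_route (i : Fin N) (σ : ℕ → Bool) {a : ℕ} (ha : a ≤ 2 * r) :
    ∃ p : (graph N r).Walk (vtx i 0) (vtx i a), (p.edges.map color).Pairwise (· < ·) ∧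
      ∀ c ∈ p.edges.map color, 2 * (c / 3) < a ∧ (σ (c / 3) ↔ c % 3 = soloType a (c / 3)) := by
  obtain ⟨k, rfl | rfl⟩ := Nat.even_or_odd' a
  · refine ⟨climb i σ k (by omega), ?_⟩
    rw [map_color_edges_climb]
    refine ⟨pairwise_lt_flatMap_rungColors σ k, fun c hc => ?_⟩
    obtain ⟨hck, h⟩ := of_mem_flatMap_rungColors hc
    simp only [soloType]
    rw [if_neg (by omega)]
    exact ⟨by omega, h⟩
  · refine ⟨(climb i σ k (by omega)).append (top i σ k (by omega)), ?_⟩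
    rw [Walk.edges_append, List.map_append, map_color_edges_climb, map_color_edges_top]
    refine ⟨List.pairwise_append.2 ⟨pairwise_lt_flatMap_rungColors σ k, ?_, fun c hc c' hc' => ?_⟩,
      fun c hc => ?_⟩
    · unfold topColors; split_ifs <;> simp
    · have := (of_mem_flatMap_rungColors hc).1
      have := (of_mem_topColors hc').1
      omega
    · simp only [soloType]
      rcases List.mem_append.1 hc with hc | hc
      · obtain ⟨hck, h⟩ := of_mem_flatMap_rungColors hc
        rw [if_neg (by omega)]
        exact ⟨by omega, h⟩
      · obtain ⟨hck, h⟩ := of_mem_topColors hc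
        rw [if_pos (by omega)]
        exact ⟨by omega, hck ▸ h⟩

theorem exists_rainbow_walk (hN : 0 < N) (x y : Vertex N r) :
    ∃ p : (graph N r).Walk x y, (p.edges.map color).Nodup := by
  obtain ⟨i, a, ha, rfl⟩ := exists_eq_vtx ⟨0, hN⟩ x
  obtain ⟨j, b, hb, rfl⟩ := exists_eq_vtx ⟨0, hN⟩ y
  -- at each level the two routes cross by disjoint sets of colours
  obtain ⟨p, hp, hpc⟩ := exists_route i (fun _ => true) ha
  obtain ⟨q, hq, hqc⟩ := exists_route j (fun τ => decide (soloType a τ ≠ soloType b τ)) hb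
  refine ⟨p.reverse.append (q.copy (by simp) rfl), ?_⟩
  rw [Walk.edges_append, Walk.edges_reverse, Walk.edges_copy, List.map_append, List.map_reverse,
    List.nodup_append]
  refine ⟨List.nodup_reverse.2 hp.nodup, hq.nodup, fun c hc c' hc' hcc => ?_⟩
  subst hcc
  have h1 := (hpc c (List.mem_reverse.1 hc)).2
  have h2 := (hqc c hc').2
  by_cases h : soloType a (c / 3) = soloType b (c / 3) <;> simp_all

theorem connected (hN : 0 < N) : (graph N r).Connected :=
  (connected_iff _).2
    ⟨fun x y => (exists_rainbow_walk hN x y).elim fun p _ => p.reachable, ⟨none⟩⟩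

theorem exists_isRainbowColoring (hr : 0 < r) (hN : 0 < N) :
    ∃ c : Sym2 (Vertex N r) → Fin (3 * r), (graph N r).IsRainbowColoring c :=
  exists_isRainbowColoring_of_forall_exists_walk (by omega) color (fun _ => color_lt)
    (exists_rainbow_walk hN)

theorem signedHeight_le_of_adj (i : Fin N) {x y : Vertex N r} (h : (graph N r).Adj x y) :
    signedHeight i y ≤ signedHeight i x + 2 := by
  obtain ⟨j, a, b, hab, hb, ⟨rfl, rfl⟩ | ⟨rfl, rfl⟩⟩ := exists_step_of_adj h <;>
  · have := hab.lt_and_le_add_two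
    rw [signedHeight_vtx i j (a := a) (by omega), signedHeight_vtx i j hb]
    split_ifs <;> omega

theorem le_dist_tip (hN : 0 < N) (i : Fin N) {x : Vertex N r} (hx : signedHeight i x ≤ 0) :
    r ≤ (graph N r).dist x (vtx i (2 * r)) := by
  have := ((connected hN).preconnected x (vtx i (2 * r))).le_add_mul_dist (signedHeight i)
    fun _ _ => signedHeight_le_of_adj i
  rw [signedHeight_vtx i i le_rfl, if_pos rfl] at this
  omega

theorem length_climb_const_true (i : Fin N) {k : ℕ} (hk : k ≤ r) :
    (climb i (fun _ => true) k hk).length = k := by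
  induction k with
  | zero => rfl
  | succ k ih => simp [climb, rung, ih]

theorem dist_none_vtx_le (i : Fin N) {a : ℕ} (ha : a ≤ 2 * r) :
    (graph N r).dist none (vtx i a) ≤ r := by
  rw [← vtx_zero i]
  obtain ⟨k, rfl | rfl⟩ := Nat.even_or_odd' a
  · calc _ ≤ (climb i (fun _ => true) k (by omega)).length := dist_le _
      _ ≤ r := by rw [length_climb_const_true]; omega
  · calc _ ≤ ((climb i (fun _ => true) k (by omega)).append
          (top i (fun _ => true) k (by omega))).length := dist_le _
      _ ≤ r := by simp [length_climb_const_true, top]; omega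

theorem finEccent_none (hN : 0 < N) : (graph N r).finEccent none = r := by
  refine le_antisymm (finEccent_le fun y => ?_) (le_finEccent (le_dist_tip hN ⟨0, hN⟩ le_rfl))
  obtain ⟨i, a, ha, rfl⟩ := exists_eq_vtx ⟨0, hN⟩ y
  exact dist_none_vtx_le i ha

theorem r_le_finEccent (hN : 1 < N) (x : Vertex N r) : r ≤ (graph N r).finEccent x := by
  obtain ⟨j, a, ha, rfl⟩ := exists_eq_vtx ⟨0, by omega⟩ x
  obtain ⟨i, hij⟩ := Fintype.exists_ne_of_one_lt_card (by simpa using hN) j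
  refine SimpleGraph.le_finEccent (le_dist_tip (by omega) i ?_)
  rw [signedHeight_vtx i j ha, if_neg hij.symm]
  omega

theorem finRadius_graph (hN : 1 < N) : (graph N r).finRadius = r :=
  finRadius_eq (finEccent_none (by omega)) (r_le_finEccent hN)

theorem mk_vtx_ne_mk_vtx {i j : Fin N} (hij : i ≠ j) {a b c d : ℕ}
    (hb : 0 < b) (hb' : b ≤ 2 * r) (hc : c ≤ 2 * r) (hd : d ≤ 2 * r) :
    s((vtx i a : Vertex N r), vtx i b) ≠ s(vtx j c, vtx j d) := by
  rw [Ne, Sym2.eq_iff]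
  rintro (⟨-, h⟩ | ⟨-, h⟩)
  exacts [vtx_ne_vtx hij hb hb' hd h, vtx_ne_vtx hij hb hb' hc h]

theorem exists_step_of_boundary {i : Fin N} {h : ℤ} (h0 : 0 < h) {x y : Vertex N r}
    (hxy : (graph N r).Adj x y) (hx : h ≤ signedHeight i x) (hy : signedHeight i y < h) :
    ∃ a b, Step a b ∧ (a : ℤ) < h ∧ h ≤ b ∧ s(x, y) = s(vtx i a, vtx i b) := by
  obtain ⟨j, a, b, hab, hb, hxy'⟩ := exists_step_of_adj hxy
  have := hab.lt_and_le_add_two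
  have hsa := signedHeight_vtx (r := r) i j (a := a) (by omega)
  have hsb := signedHeight_vtx i j hb
  rcases hxy' with ⟨rfl, rfl⟩ | ⟨rfl, rfl⟩ <;> simp only [hsa, hsb] at hx hy <;>
    split_ifs at hx hy with hji <;> try omega
  subst hji
  exact ⟨a, b, hab, hy, hx, Sym2.eq_swap⟩

theorem mem_edges_of_signedHeight {x y : Vertex N r} (p : (graph N r).Walk x y) {i : Fin N}
    {τ : ℕ} (hx : 2 * τ + 2 ≤ signedHeight i x) (hy : signedHeight i y ≤ 2 * τ) :
    s(vtx i (2 * τ), vtx i (2 * τ + 2)) ∈ p.edges ∨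
      s(vtx i (2 * τ), vtx i (2 * τ + 1)) ∈ p.edges ∧
        s(vtx i (2 * τ + 1), vtx i (2 * τ + 2)) ∈ p.edges := by
  have cross : ∀ h : ℤ, 0 < h → h ≤ signedHeight i x → signedHeight i y < h →
      ∃ a b, Step a b ∧ (a : ℤ) < h ∧ h ≤ b ∧ s(vtx i a, vtx i b) ∈ p.edges := by
    intro h h0 hx hy
    obtain ⟨d, hd, hdx, hdy⟩ := p.exists_boundary_dart {z | h ≤ signedHeight i z} hx (not_le.2 hy)
    obtain ⟨a, b, hab, ha, hb, he⟩ := exists_step_of_boundary h0 d.adj hdx (not_le.1 hdy)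
    exact ⟨a, b, hab, ha, hb, he ▸ List.mem_map_of_mem hd⟩
  obtain ⟨a, b, hab, ha, hb, hmem⟩ := cross (2 * τ + 1) (by omega) (by omega) (by omega)
  obtain ⟨a', b', hab', ha', hb', hmem'⟩ := cross (2 * τ + 2) (by omega) hx (by omega)
  have lower : s(vtx i (2 * τ), vtx i (2 * τ + 2)) ∈ p.edges ∨
      s(vtx i (2 * τ), vtx i (2 * τ + 1)) ∈ p.edges := by
    rcases hab with rfl | ⟨hev, rfl⟩
    · obtain rfl : a = 2 * τ := by omega
      exact .inr hmem
    · rw [Nat.even_iff] at hev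
      obtain rfl : a = 2 * τ := by omega
      exact .inl hmem
  have upper : s(vtx i (2 * τ), vtx i (2 * τ + 2)) ∈ p.edges ∨
      s(vtx i (2 * τ + 1), vtx i (2 * τ + 2)) ∈ p.edges := by
    rcases hab' with rfl | ⟨hev, rfl⟩
    · obtain rfl : a' = 2 * τ + 1 := by omega
      exact .inr hmem'
    · rw [Nat.even_iff] at hev
      obtain rfl : a' = 2 * τ := by omega
      exact .inl hmem'
  tauto

theorem three_le_card_filter_color_div_three {k : ℕ} {c : Sym2 (Vertex N r) → Fin k}
    {i j : Fin N} (hij : i ≠ j) {τ : ℕ} (hτ : τ < r)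
    (hc : c s(vtx i (2 * τ), vtx i (2 * τ + 2)) = c s(vtx j (2 * τ), vtx j (2 * τ + 2)))
    (p : (graph N r).Walk (vtx i (2 * r)) (vtx j (2 * r))) (hp : (p.edges.map c).Nodup) :
    3 ≤ (p.edges.toFinset.filter fun e => color e / 3 = τ).card := by
  have hi := mem_edges_of_signedHeight p (i := i) (τ := τ)
    (by rw [signedHeight_vtx i i le_rfl, if_pos rfl]; omega)
    (by rw [signedHeight_vtx i j le_rfl, if_neg hij.symm]; omega)
  have hj := mem_edges_of_signedHeight p.reverse (i := j) (τ := τ)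
    (by rw [signedHeight_vtx j j le_rfl, if_pos rfl]; omega)
    (by rw [signedHeight_vtx j i le_rfl, if_neg hij]; omega)
  simp only [Walk.edges_reverse, List.mem_reverse] at hj
  have mem : ∀ e ∈ p.edges, color e / 3 = τ →
      e ∈ p.edges.toFinset.filter fun e => color e / 3 = τ :=
    fun e he h => Finset.mem_filter.2 ⟨List.mem_toFinset.2 he, h⟩
  have hlower := color_lower (N := N) (i := i) (j := i) hτ
  have hspine := color_spine (N := N) (i := i) (j := i) hτ
  have hupper := color_upper (N := N) (i := i) (j := i) hτ
  have hlower' := color_lower (N := N) (i := j) (j := j) hτ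
  have hspine' := color_spine (N := N) (i := j) (j := j) hτ
  have hupper' := color_upper (N := N) (i := j) (j := j) hτ
  refine Finset.two_lt_card.2 ?_
  rcases hi with hA | ⟨hB, hC⟩ <;> rcases hj with hA' | ⟨hB', hC'⟩
  · exact absurd (List.inj_on_of_nodup_map hp hA hA' hc)
      (mk_vtx_ne_mk_vtx hij (by omega) (by omega) (by omega) (by omega))
  · refine ⟨_, mem _ hA (by omega), _, mem _ hB' (by omega), _, mem _ hC' (by omega),
      ?_, ?_, ?_⟩ <;> exact ne_of_apply_ne color (by omega)
  · refine ⟨_, mem _ hB (by omega), _, mem _ hC (by omega), _, mem _ hA' (by omega),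
      ?_, ?_, ?_⟩ <;> exact ne_of_apply_ne color (by omega)
  · refine ⟨_, mem _ hB (by omega), _, mem _ hC (by omega), _, mem _ hB' (by omega),
      ne_of_apply_ne color (by omega),
      mk_vtx_ne_mk_vtx hij (by omega) (by omega) (by omega) (by omega),
      ne_of_apply_ne color (by omega)⟩

theorem three_mul_le_card_toFinset_edges {k : ℕ} {c : Sym2 (Vertex N r) → Fin k}
    {i j : Fin N} (hij : i ≠ j)
    (hc : ∀ τ < r, c s(vtx i (2 * τ), vtx i (2 * τ + 2)) = c s(vtx j (2 * τ), vtx j (2 * τ + 2)))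
    (p : (graph N r).Walk (vtx i (2 * r)) (vtx j (2 * r))) (hp : (p.edges.map c).Nodup) :
    3 * r ≤ p.edges.toFinset.card := by
  classical
  calc 3 * r = ∑ _τ ∈ Finset.range r, 3 := by simp [mul_comm]
    _ ≤ ∑ τ ∈ Finset.range r, (p.edges.toFinset.filter fun e => color e / 3 = τ).card :=
      Finset.sum_le_sum fun τ hτ =>
        three_le_card_filter_color_div_three hij (Finset.mem_range.1 hτ)
          (hc τ (Finset.mem_range.1 hτ)) p hp
    _ = (p.edges.toFinset.filter fun e => color e / 3 ∈ Finset.range r).card :=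
      Finset.sum_card_fiberwise_eq_card_filter _ _ _
    _ ≤ p.edges.toFinset.card := Finset.card_filter_le _ _

theorem three_mul_le_of_isRainbowColoring (hN : (3 * r - 1) ^ r < N) {k : ℕ}
    {c : Sym2 (Vertex N r) → Fin k} (hc : (graph N r).IsRainbowColoring c) : 3 * r ≤ k := by
  by_contra! hk
  have hcard : Fintype.card (Fin r → Fin k) < Fintype.card (Fin N) := by
    simp only [Fintype.card_fun, Fintype.card_fin]
    exact lt_of_le_of_lt (Nat.pow_le_pow_left (by omega) r) hN
  obtain ⟨i, j, hij, hsame⟩ := Fintype.exists_ne_map_eq_of_card_lt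
    (fun i (τ : Fin r) => c s(vtx i (2 * τ), vtx i (2 * τ + 2))) hcard
  obtain ⟨p, -, hp⟩ := hc (vtx i (2 * r)) (vtx j (2 * r))
  have h3r := three_mul_le_card_toFinset_edges hij (fun τ hτ => congrFun hsame ⟨τ, hτ⟩) p hp
  have hlen : p.edges.toFinset.card ≤ k :=
    calc _ ≤ p.edges.length := List.toFinset_card_le _
      _ = (p.edges.map c).length := (List.length_map _).symm
      _ ≤ k := by simpa using hp.length_le_card
  omega

theorem rainbowConnectionNumber_graph (hr : 0 < r) (hN : (3 * r - 1) ^ r < N) :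
    (graph N r).rainbowConnectionNumber = 3 * r :=
  have ⟨_, hc⟩ := exists_isRainbowColoring hr (N := N) (by omega)
  rainbowConnectionNumber_eq hc fun _ _ => three_mul_le_of_isRainbowColoring hN

end SnakeBouquet

/-- **Example 1.** For every positive integer `r` there is a bridgeless
graph in which every edge lies in a triangle, with radius `r`, whose rainbow
connection number satisfies `3r - 1 ≤ rc(G) ≤ 3r`. -/
theorem exists_bridgeless_triangle_graph_with_rc_near_three_radius (r : ℕ) (hr : 1 ≤ r) :
    ∃ (n : ℕ) (G : SimpleGraph (Fin n)),
      G.Bridgeless ∧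
      (∀ u v : Fin n, G.Adj u v → ∃ w : Fin n, G.Adj u w ∧ G.Adj v w) ∧
      G.finRadius = r ∧
      3 * r - 1 ≤ G.rainbowConnectionNumber ∧ G.rainbowConnectionNumber ≤ 3 * r := by
  set N := (3 * r - 1) ^ r + 1
  have hN : 1 < N := by
    have := Nat.one_le_pow r (3 * r - 1) (by omega)
    omega
  let e := SimpleGraph.Iso.map (Fintype.equivFin _) (SnakeBouquet.graph N r)
  have htri := e.forall_adj_exists_common_adj fun _ _ => SnakeBouquet.exists_common_adj
  refine ⟨_, _, SimpleGraph.bridgeless_of_forall_adj_exists_common_adj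
    (e.connected_iff.1 (SnakeBouquet.connected (by omega))) htri, htri, ?_, ?_⟩
  · rw [e.finRadius_eq, SnakeBouquet.finRadius_graph hN]
  · rw [← e.rainbowConnectionNumber_eq, SnakeBouquet.rainbowConnectionNumber_graph hr (by omega)]
    omega
end

section
/- For every integer n ≥ 217, let G be the graph obtained from the complete graph K_n on vertices v₁, …, v_n by attaching to each vᵢ a hanging path vᵢ, v_{i,1}, v_{i,2}, v_{i,3} of length 3 and then identifying all the endpoints v_{i,3} into a single vertex v. Then G is a bridgeless graph with diameter diam(G) = 3 whose rainbow connection number satisfies rc(G) ≥ 7. -/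
/-- The base relation of the graph of Example 2: vertices are the `n` vertices
`vᵢ = .inl i` of a complete graph, the internal path vertices `vᵢ,₁ = .inr (.inl (i,0))`
and `vᵢ,₂ = .inr (.inl (i,1))`, and the single identified end vertex `v = .inr (.inr ())`.
Each `vᵢ` is joined to every other `v_j`, and `vᵢ — vᵢ,₁ — vᵢ,₂ — v` is a hanging path. -/
def exampleRel (n : ℕ) :
    (Fin n ⊕ ((Fin n × Fin 2) ⊕ Unit)) → (Fin n ⊕ ((Fin n × Fin 2) ⊕ Unit)) → Prop
  | Sum.inl i, Sum.inl j => i ≠ j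
  | Sum.inl i, Sum.inr (Sum.inl (j, k)) => i = j ∧ k = 0
  | Sum.inr (Sum.inl (i, k)), Sum.inr (Sum.inl (j, l)) => i = j ∧ k ≠ l
  | Sum.inr (Sum.inl (_, k)), Sum.inr (Sum.inr _) => k = 1
  | _, _ => False

/-- The graph of Example 2: a complete graph `K_n` with a hanging path of length `3`
attached to each vertex, all far endpoints of the paths being identified. -/
def exampleGraph (n : ℕ) : SimpleGraph (Fin n ⊕ ((Fin n × Fin 2) ⊕ Unit)) :=
  SimpleGraph.fromRel (exampleRel n)

namespace SimpleGraph

variable {V : Type*} {G : SimpleGraph V} {k : ℕ}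

namespace Walk

def IsRainbow {u v : V} (c : Sym2 V → Fin k) (p : G.Walk u v) : Prop :=
  (p.edges.map c).Nodup

variable {c : Sym2 V → Fin k} {u v : V} {p : G.Walk u v}

lemma IsRainbow.reverse (hp : p.IsRainbow c) : p.reverse.IsRainbow c := by
  simpa [IsRainbow, edges_reverse, List.map_reverse] using hp

lemma IsRainbow.length_le (hp : p.IsRainbow c) : p.length ≤ k := by
  simpa using hp.length_le_card

lemma IsRainbow.apply_ne (hp : p.IsRainbow c) {e f : Sym2 V} (he : e ∈ p.edges)
    (hf : f ∈ p.edges) (hef : e ≠ f) : c e ≠ c f :=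
  fun h => hef (List.inj_on_of_nodup_map hp he hf h)

end Walk

lemma Preconnected.exists_isRainbowColoring [Finite V] (hG : G.Preconnected) :
    ∃ k, ∃ c : Sym2 V → Fin k, G.IsRainbowColoring c := by
  classical
  refine ⟨Nat.card (Sym2 V), Finite.equivFin _, fun u v => ?_⟩
  obtain ⟨p⟩ := hG u v
  exact ⟨p.bypass, p.bypass_isPath, p.bypass_isPath.edges_nodup.map (Finite.equivFin _).injective⟩

lemma le_rainbowConnectionNumber [Finite V] (hG : G.Preconnected) {m : ℕ}
    (h : ∀ k (c : Sym2 V → Fin k), G.IsRainbowColoring c → m ≤ k) :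
    m ≤ G.rainbowConnectionNumber := by
  obtain ⟨k, c, hc⟩ := hG.exists_isRainbowColoring
  exact le_csInf ⟨k, c, hc⟩ fun k ⟨c, hc⟩ => h k c hc

end SimpleGraph

namespace exampleGraph

open SimpleGraph Walk

variable {n : ℕ}

abbrev Vert (n : ℕ) : Type := Fin n ⊕ ((Fin n × Fin 2) ⊕ Unit)

def v (i : Fin n) : Vert n := .inl i
def v₁ (i : Fin n) : Vert n := .inr (.inl (i, 0))
def v₂ (i : Fin n) : Vert n := .inr (.inl (i, 1))
def hub : Vert n := .inr (.inr ())

lemma adj_v_v {i j : Fin n} (h : i ≠ j) : (exampleGraph n).Adj (v i) (v j) := by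
  simp [exampleGraph, exampleRel, v, h]

lemma adj_v_v₁ (i : Fin n) : (exampleGraph n).Adj (v i) (v₁ i) := by
  simp [exampleGraph, exampleRel, v, v₁]

lemma adj_v₁_v₂ (i : Fin n) : (exampleGraph n).Adj (v₁ i) (v₂ i) := by
  simp [exampleGraph, exampleRel, v₁, v₂]

lemma adj_v₂_hub (i : Fin n) : (exampleGraph n).Adj (v₂ i) hub := by
  simp [exampleGraph, exampleRel, v₂, hub]

lemma adj_v₁_iff {i : Fin n} {w : Vert n} :
    (exampleGraph n).Adj (v₁ i) w ↔ w = v i ∨ w = v₂ i := by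
  refine ⟨fun h => ?_, ?_⟩
  · rcases w with j | ⟨j, k⟩ | _ <;> [skip; fin_cases k; skip] <;>
      simp_all [exampleGraph, exampleRel, v, v₁, v₂, eq_comm]
  · rintro (rfl | rfl)
    exacts [(adj_v_v₁ i).symm, adj_v₁_v₂ i]

lemma adj_v₂_iff {i : Fin n} {w : Vert n} :
    (exampleGraph n).Adj (v₂ i) w ↔ w = v₁ i ∨ w = hub := by
  refine ⟨fun h => ?_, ?_⟩
  · rcases w with j | ⟨j, k⟩ | _ <;> [skip; fin_cases k; skip] <;>
      simp_all [exampleGraph, exampleRel, v₁, v₂, hub, eq_comm]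
  · rintro (rfl | rfl)
    exacts [(adj_v₁_v₂ i).symm, adj_v₂_hub i]

lemma adj_hub_iff {w : Vert n} : (exampleGraph n).Adj hub w ↔ ∃ i, w = v₂ i := by
  refine ⟨fun h => ?_, ?_⟩
  · rcases w with j | ⟨j, k⟩ | _ <;> [skip; fin_cases k; skip] <;>
      simp_all [exampleGraph, exampleRel, v₂, hub]
  · rintro ⟨i, rfl⟩
    exact (adj_v₂_hub i).symm

def level : Vert n → ℕ
  | .inl _ => 0
  | .inr (.inl (_, k)) => k + 1
  | .inr (.inr _) => 3

lemma exists_walk_hub (x : Vert n) :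
    ∃ p : (exampleGraph n).Walk x hub, p.length + level x = 3 := by
  rcases x with i | ⟨i, k⟩ | ⟨⟩
  · exact ⟨.cons (adj_v_v₁ i) (.cons (adj_v₁_v₂ i) (.cons (adj_v₂_hub i) .nil)), rfl⟩
  · fin_cases k
    · exact ⟨.cons (adj_v₁_v₂ i) (.cons (adj_v₂_hub i) .nil), rfl⟩
    · exact ⟨.cons (adj_v₂_hub i) .nil, rfl⟩
  · exact ⟨.nil, rfl⟩

lemma exists_walk_v (x : Vert n) (hx : x ≠ hub) :
    ∃ i, ∃ p : (exampleGraph n).Walk x (v i), p.length = level x := by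
  rcases x with i | ⟨i, k⟩ | ⟨⟩
  · exact ⟨i, .nil, rfl⟩
  · fin_cases k
    · exact ⟨i, .cons (adj_v_v₁ i).symm .nil, rfl⟩
    · exact ⟨i, .cons (adj_v₁_v₂ i).symm (.cons (adj_v_v₁ i).symm .nil), rfl⟩
  · exact absurd rfl hx

lemma exists_walk_v_v (i j : Fin n) : ∃ p : (exampleGraph n).Walk (v i) (v j), p.length ≤ 1 := by
  by_cases h : i = j
  · subst h
    exact ⟨.nil, zero_le_one⟩
  · exact ⟨.cons (adj_v_v h) .nil, le_rfl⟩

lemma connected (hn : 0 < n) : (exampleGraph n).Connected := by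
  have : Nonempty (Vert n) := ⟨v ⟨0, hn⟩⟩
  refine .mk fun x y => ?_
  obtain ⟨p, -⟩ := exists_walk_hub x
  obtain ⟨q, -⟩ := exists_walk_hub y
  exact ⟨p.append q.reverse⟩

lemma edist_le_three (x y : Vert n) : (exampleGraph n).edist x y ≤ 3 := by
  suffices ∃ p : (exampleGraph n).Walk x y, p.length ≤ 3 by
    obtain ⟨p, hp⟩ := this
    exact p.edist_le.trans (by exact_mod_cast hp)
  by_cases hxy : 3 ≤ level x + level y
  · obtain ⟨p, hp⟩ := exists_walk_hub x
    obtain ⟨q, hq⟩ := exists_walk_hub y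
    exact ⟨p.append q.reverse, by simp only [length_append, length_reverse]; omega⟩
  · have hx : x ≠ hub := by rintro rfl; simp [level, hub] at hxy
    have hy : y ≠ hub := by rintro rfl; simp [level, hub] at hxy
    obtain ⟨i, p, hp⟩ := exists_walk_v x hx
    obtain ⟨j, q, hq⟩ := exists_walk_v y hy
    obtain ⟨r, hr⟩ := exists_walk_v_v i j
    exact ⟨p.append (r.append q.reverse), by simp only [length_append, length_reverse]; omega⟩

lemma two_lt_edist_v_hub (i : Fin n) : 2 < (exampleGraph n).edist (v i) hub := by
  refine two_lt_edist_iff.mpr ⟨by simp [v, hub], fun h => ?_, ?_⟩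
  · obtain ⟨k, hk⟩ := adj_hub_iff.mp h.symm
    simp [v, v₂] at hk
  · refine Set.eq_empty_iff_forall_notMem.mpr fun w ⟨hvw, hw⟩ => ?_
    obtain ⟨k, rfl⟩ := adj_hub_iff.mp hw
    obtain h | h := adj_v₂_iff.mp hvw.symm <;> simp [v, v₁, hub] at h

lemma two_lt_edist_v_v₂ {i j : Fin n} (hij : i ≠ j) : 2 < (exampleGraph n).edist (v i) (v₂ j) := by
  refine two_lt_edist_iff.mpr ⟨by simp [v, v₂], fun h => ?_, ?_⟩
  · obtain h | h := adj_v₂_iff.mp h.symm <;> simp [v, v₁, hub] at h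
  · refine Set.eq_empty_iff_forall_notMem.mpr fun w ⟨hvw, hw⟩ => ?_
    obtain rfl | rfl := adj_v₂_iff.mp hw
    · obtain h | h := adj_v₁_iff.mp hvw.symm <;> simp [v, v₂, hij] at h
    · obtain ⟨k, hk⟩ := adj_hub_iff.mp hvw.symm
      simp [v, v₂] at hk

lemma ediam_eq_three (hn : 0 < n) : (exampleGraph n).ediam = 3 :=
  le_antisymm (ediam_le_of_edist_le edist_le_three)
    (Order.add_one_le_of_lt (two_lt_edist_v_hub ⟨0, hn⟩) |>.trans edist_le_ediam)

lemma diam_eq_three (hn : 0 < n) : (exampleGraph n).diam = 3 := by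
  rw [diam, ediam_eq_three hn]
  rfl

def cycle {i j : Fin n} (h : i ≠ j) : (exampleGraph n).Walk (v i) (v i) :=
  .cons (adj_v_v₁ i) <| .cons (adj_v₁_v₂ i) <| .cons (adj_v₂_hub i) <|
    .cons (adj_v₂_hub j).symm <| .cons (adj_v₁_v₂ j).symm <| .cons (adj_v_v₁ j).symm <|
      .cons (adj_v_v h.symm) .nil

lemma edges_cycle {i j : Fin n} (h : i ≠ j) : (cycle h).edges =
    [s(v i, v₁ i), s(v₁ i, v₂ i), s(v₂ i, hub), s(hub, v₂ j), s(v₂ j, v₁ j), s(v₁ j, v j),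
      s(v j, v i)] := rfl

lemma isCycle_cycle {i j : Fin n} (h : i ≠ j) : (cycle h).IsCycle := by
  simp only [cycle, isCycle_def, isTrail_def, edges_cons, support_cons, edges_nil, support_nil,
    List.tail_cons]
  refine ⟨?_, by simp, ?_⟩ <;> simp [v, v₁, v₂, hub, h, h.symm]

lemma exists_mem_edges_cycle (hn : 2 ≤ n) {e : Sym2 (Vert n)} (he : e ∈ (exampleGraph n).edgeSet) :
    ∃ i j, ∃ h : i ≠ j, e ∈ (cycle h).edges := by
  have : Nontrivial (Fin n) := Fin.nontrivial_iff_two_le.mpr hn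
  induction e with | h x y => ?_
  rw [SimpleGraph.mem_edgeSet] at he
  rcases x with i | ⟨i, k⟩ | ⟨⟩ <;> rcases y with j | ⟨j, l⟩ | ⟨⟩ <;>
    simp [exampleGraph, exampleRel] at he
  case inl.inl => exact ⟨i, j, he.1, by rw [edges_cycle]; simp [v]⟩
  case inr.inr.inr.inl =>
    obtain ⟨m, hm⟩ := exists_ne j
    exact ⟨j, m, hm.symm, by rw [edges_cycle]; simp [v₂, hub, he]⟩
  all_goals
    obtain ⟨m, hm⟩ := exists_ne i
    refine ⟨i, m, hm.symm, ?_⟩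
    rw [edges_cycle]
  case inr.inl.inr.inl =>
    obtain ⟨rfl, hkl⟩ : i = j ∧ k ≠ l := he.2.elim id fun h => ⟨h.1.symm, Ne.symm h.2⟩
    fin_cases k <;> fin_cases l <;> simp_all [v₁, v₂]
  all_goals simp_all [v, v₁, v₂, hub]

lemma not_isBridge (hn : 2 ≤ n) {e : Sym2 (Vert n)} (he : e ∈ (exampleGraph n).edgeSet) :
    ¬ (exampleGraph n).IsBridge e := fun hb => by
  obtain ⟨i, j, h, hmem⟩ := exists_mem_edges_cycle hn he
  exact hb.notMem_edges_of_isCycle (isCycle_cycle h) hmem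

variable {k : ℕ} {c : Sym2 (Vert n) → Fin k}

lemma edges_eq_or_six_le_length_of_isPath {j : Fin n} (q : (exampleGraph n).Walk hub (v₂ j)) (hq : q.IsPath) :
    q.edges = [s(hub, v₂ j)] ∨ 6 ≤ q.length := by
  obtain ⟨_, h, r, rfl⟩ := exists_eq_cons_of_ne (by simp [hub, v₂]) q
  obtain ⟨i, rfl⟩ := adj_hub_iff.mp h
  obtain ⟨hr, hhub⟩ := (cons_isPath_iff h r).mp hq
  by_cases hij : i = j
  · subst hij
    simp [eq_nil_iff_nil.mpr (isPath_iff_nil.mp hr)]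
  right
  obtain ⟨_, h₂, r₂, rfl⟩ := exists_eq_cons_of_ne (by simp [v₂, hij]) r
  obtain ⟨-, hv₂⟩ := (cons_isPath_iff h₂ r₂).mp hr
  obtain rfl | rfl := adj_v₂_iff.mp h₂
  · obtain ⟨_, h₁, r₁, rfl⟩ := exists_eq_cons_of_ne (by simp [v₁, v₂]) r₂
    obtain rfl | rfl := adj_v₁_iff.mp h₁
    · have := (two_lt_edist_v_v₂ hij).trans_le r₁.edist_le
      norm_cast at this
      simp only [length_cons]
      omega
    · simp at hv₂
  · simp at hhub

lemma not_isRainbow_cons_hub (hk : k ≤ 6) {i j : Fin n} (hij : i ≠ j)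
    (hc : c s(v₂ i, hub) = c s(v₂ j, hub)) (h : (exampleGraph n).Adj (v₂ i) hub)
    (q : (exampleGraph n).Walk hub (v₂ j)) (hq : (cons h q).IsPath) :
    ¬ (cons h q).IsRainbow c := by
  intro hr
  rcases edges_eq_or_six_le_length_of_isPath q hq.of_cons with hq₁ | hq₆
  · exact hr.apply_ne (by simp) (by simp [hq₁, Sym2.eq_swap]) (by simp [v₂, hub, hij]) hc
  · have := hr.length_le
    simp only [length_cons] at this
    omega

lemma not_isRainbow_of_isPath (hk : k ≤ 6) {i j : Fin n} (hij : i ≠ j)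
    (h₁ : c s(v₂ i, v₁ i) = c s(v₂ j, v₁ j)) (h₂ : c s(v₂ i, hub) = c s(v₂ j, hub))
    (p : (exampleGraph n).Walk (v₂ i) (v₂ j)) (hp : p.IsPath) : ¬ p.IsRainbow c := by
  intro hr
  have hne : (v₂ i : Vert n) ≠ v₂ j := by simp [v₂, hij]
  obtain ⟨_, h, q, rfl⟩ := exists_eq_cons_of_ne hne p
  obtain rfl | rfl := adj_v₂_iff.mp h
  · obtain ⟨_, h', q', hq'⟩ := exists_eq_cons_of_ne hne.symm (cons h q).reverse
    obtain rfl | rfl := adj_v₂_iff.mp h'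
    · have hmem : s(v₂ j, v₁ j) ∈ (cons h q).reverse.edges := by
        rw [hq']
        simp
      rw [edges_reverse, List.mem_reverse] at hmem
      exact hr.apply_ne (by simp) hmem (by simp [v₁, v₂, hij]) h₁
    · exact not_isRainbow_cons_hub hk hij.symm h₂.symm h' q' (hq' ▸ hp.reverse) (hq' ▸ hr.reverse)
  · exact not_isRainbow_cons_hub hk hij h₂ h q hp hr

lemma not_isRainbowColoring (hk : k ≤ 6) (hn : k ^ 2 < n) (c : Sym2 (Vert n) → Fin k) :
    ¬ (exampleGraph n).IsRainbowColoring c := by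
  intro hc
  obtain ⟨i, j, hij, hcol⟩ := Fintype.exists_ne_map_eq_of_card_lt
    (fun i : Fin n => (c s(v₂ i, v₁ i), c s(v₂ i, hub))) (by simpa [sq] using hn)
  obtain ⟨p, hp, hr⟩ := hc (v₂ i) (v₂ j)
  exact not_isRainbow_of_isPath hk hij (congrArg Prod.fst hcol) (congrArg Prod.snd hcol) p hp hr

lemma seven_le_rainbowConnectionNumber (hn : 36 < n) :
    7 ≤ (exampleGraph n).rainbowConnectionNumber := by
  refine le_rainbowConnectionNumber (connected (by omega)).preconnected fun k c hc => ?_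
  by_contra! hk
  exact not_isRainbowColoring (by omega) (by nlinarith) c hc

end exampleGraph

/-- **Example 2.** For `n ≥ 217`, the graph obtained from `K_n` by
hanging a path of length `3` at each vertex and identifying all the far endpoints is a
bridgeless graph of diameter `3` with rainbow connection number at least `7`. -/
theorem exampleGraph_bridgeless_diam_three_rc_ge_seven (n : ℕ) (hn : 217 ≤ n) :
    (exampleGraph n).Bridgeless ∧ (exampleGraph n).diam = 3 ∧
      7 ≤ (exampleGraph n).rainbowConnectionNumber :=
  ⟨⟨exampleGraph.connected (by omega), fun _ he => exampleGraph.not_isBridge (by omega) he⟩,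
    exampleGraph.diam_eq_three (by omega), exampleGraph.seven_le_rainbowConnectionNumber (by omega)⟩
end

section
/- Let G be a bridgeless finite simple graph with diameter 3, let uv be an edge of G contained in no triangle, and set A = N(u)∖{v}, B = N(v)∖{u}, X = {x ∉ A∪B∪{u,v} : x has a neighbor in A but no neighbor in B}, Z = {x ∉ A∪B∪{u,v} : x has a neighbor in A and a neighbor in B}, A₁ = {x ∈ A : x has a neighbor in B∪X∪Z}, A₂ = {x ∈ A∖A₁ : x is not isolated in G[A∖A₁]}, and A₃ = A∖(A₁∪A₂). Then every vertex of A₃ has a neighbor in A₁. -/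
namespace SimpleGraph

variable {V : Type*} {G : SimpleGraph V}

theorem exists_adj_ne_of_not_isBridge {x u : V} (hxu : G.Adj x u)
    (hbr : ¬ G.IsBridge s(x, u)) : ∃ y, G.Adj x y ∧ y ≠ u := by
  obtain ⟨p⟩ : (G.deleteEdges {s(x, u)}).Reachable x u := by
    simpa [isBridge_iff, hxu] using hbr
  cases p with
  | nil => exact absurd rfl hxu.ne
  | cons h _ =>
    rw [deleteEdges_adj] at h
    exact ⟨_, h.1, fun hyu => h.2 (by simp [hyu])⟩

end SimpleGraph

theorem A3_has_neighbor_in_A1_general {V : Type*} (G : SimpleGraph V)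
    (hb : G.Bridgeless)
    (u v : V)
    (htri : ¬ ∃ w : V, G.Adj u w ∧ G.Adj v w)
    (A B X Z A₁ A₂ A₃ : Set V)
    (hA : A = {x | G.Adj u x ∧ x ≠ v})
    (hX : X = {x | x ∉ A ∪ B ∪ {u, v} ∧ (∃ a ∈ A, G.Adj x a) ∧ ¬ ∃ b ∈ B, G.Adj x b})
    (hZ : Z = {x | x ∉ A ∪ B ∪ {u, v} ∧ (∃ a ∈ A, G.Adj x a) ∧ ∃ b ∈ B, G.Adj x b})
    (hA₁ : A₁ = {x ∈ A | ∃ y ∈ B ∪ X ∪ Z, G.Adj x y})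
    (hA₂ : A₂ = {x ∈ A \ A₁ | ∃ y ∈ A \ A₁, G.Adj x y})
    (hA₃ : A₃ = A \ (A₁ ∪ A₂)) :
    ∀ x ∈ A₃, ∃ y ∈ A₁, G.Adj x y := by
  intro x hx
  rw [hA₃] at hx
  obtain ⟨hxA, hxA₁₂⟩ := hx
  have hux : G.Adj u x := (hA ▸ hxA).1
  -- Since `ux` is not a bridge, `x` has a second neighbour `y`. Every place for `y` other than
  -- `A₁` would put `x` into `A₁` or `A₂`; `y ≠ v` because `uv` lies in no triangle.
  obtain ⟨y, hxy, hyu⟩ := G.exists_adj_ne_of_not_isBridge hux.symm (hb.2 _ hux.symm)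
  refine ⟨y, ?_, hxy⟩
  by_contra hyA₁
  have hxA₁ : x ∉ A₁ := fun h => hxA₁₂ (Or.inl h)
  have hyA : y ∉ A := fun h => hxA₁₂ (Or.inr (hA₂ ▸ ⟨⟨hxA, hxA₁⟩, y, ⟨h, hyA₁⟩, hxy⟩))
  have hyBXZ : y ∉ B ∪ X ∪ Z := fun h => hxA₁ (hA₁ ▸ ⟨hxA, y, h, hxy⟩)
  have hyv : y ≠ v := fun h => htri ⟨x, hux, h ▸ hxy.symm⟩
  have hy_out : y ∉ A ∪ B ∪ {u, v} := by
    rintro ((h | h) | h | h)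
    exacts [hyA h, hyBXZ (.inl (.inl h)), hyu h, hyv h]
  by_cases hyB : ∃ b ∈ B, G.Adj y b
  · exact hyBXZ (.inr (hZ ▸ ⟨hy_out, ⟨x, hxA, hxy.symm⟩, hyB⟩))
  · exact hyBXZ (.inl (.inr (hX ▸ ⟨hy_out, ⟨x, hxA, hxy.symm⟩, hyB⟩)))

/-- **Observation 1 (1).** In a bridgeless graph of diameter `3` with an
edge `uv` lying in no triangle, with `A = N(u) \ {v}`, `B = N(v) \ {u}`,
`X` the outside vertices with a neighbor in `A` but none in `B`,
`Z` the outside vertices with neighbors in both `A` and `B`,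
`A₁` the vertices of `A` with a neighbor in `B ∪ X ∪ Z`,
`A₂` the non-isolated vertices of `G[A \ A₁]`, and `A₃ = A \ (A₁ ∪ A₂)`,
every vertex of `A₃` has a neighbor in `A₁`. -/
theorem A3_has_neighbor_in_A1 {V : Type*} [Fintype V] (G : SimpleGraph V)
    (hb : G.Bridgeless) (hd : G.diam = 3)
    (u v : V) (huv : G.Adj u v)
    (htri : ¬ ∃ w : V, G.Adj u w ∧ G.Adj v w)
    (A B X Z A₁ A₂ A₃ : Set V)
    (hA : A = {x | G.Adj u x ∧ x ≠ v})
    (hB : B = {x | G.Adj v x ∧ x ≠ u})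
    (hX : X = {x | x ∉ A ∪ B ∪ {u, v} ∧ (∃ a ∈ A, G.Adj x a) ∧ ¬ ∃ b ∈ B, G.Adj x b})
    (hZ : Z = {x | x ∉ A ∪ B ∪ {u, v} ∧ (∃ a ∈ A, G.Adj x a) ∧ ∃ b ∈ B, G.Adj x b})
    (hA₁ : A₁ = {x ∈ A | ∃ y ∈ B ∪ X ∪ Z, G.Adj x y})
    (hA₂ : A₂ = {x ∈ A \ A₁ | ∃ y ∈ A \ A₁, G.Adj x y})
    (hA₃ : A₃ = A \ (A₁ ∪ A₂)) :
    ∀ x ∈ A₃, ∃ y ∈ A₁, G.Adj x y :=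
  A3_has_neighbor_in_A1_general G hb u v htri A B X Z A₁ A₂ A₃ hA hX hZ hA₁ hA₂ hA₃
end
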